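/- arXiv:2108.00740 — 4 statements merged into one kernel-verified Lean document; each statement's English description precedes it below -/
import Mathlib

section
/- Let A_1, ..., A_m be positive definite real symmetric n×n matrices and set W = (Σ_{i=1}^m tr(A_i) A_i)^{1/2}. Then for every real symmetric n×n matrix Y one has Σ_{i=1}^m tr(A_i Y)^2 ≤ tr(Y W Y W). (This is the identity-element case b_k = e of Theorem 1, specialized to the positive semidefinite cone.) -/
open Matrix BigOperators

/- `msqrt A` is the positive semidefinite square root of `A` (junk value `0` when `A` is
not positive semidefinite). -/
open Classical in
noncomputable def msqrt {n : ℕ} (A : Matrix (Fin n) (Fin n) ℝ) : Matrix (Fin n) (Fin n) ℝ :=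
  if h : A.PosSemidef then
    (h.1.eigenvectorUnitary : Matrix (Fin n) (Fin n) ℝ) *
      diagonal (Real.sqrt ∘ h.1.eigenvalues) *
      (star h.1.eigenvectorUnitary : Matrix (Fin n) (Fin n) ℝ)
  else 0

/- The matrix geometric mean `X # Y = X^{1/2} (X^{-1/2} Y X^{-1/2})^{1/2} X^{1/2}`. -/
noncomputable def gmean {n : ℕ} (X Y : Matrix (Fin n) (Fin n) ℝ) : Matrix (Fin n) (Fin n) ℝ :=
  msqrt X * msqrt (msqrt X⁻¹ * Y * msqrt X⁻¹) * msqrt X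

/-!
Write `Φ Y = ∑ i, tr (A i Y) • A i`; the claim is `⟪Y, Φ Y⟫ ≤ ⟪Y, P(W) Y⟫`. Conjugating by
`V = W^{1/2}` turns it into `⟪Z, T Z⟫ ≤ ⟪Z, Z⟫` for the frame operator `T` of the positive
semidefinite family `cᵢ = V⁻¹ Aᵢ V⁻¹`, and `W² = ∑ tr (Aᵢ) • Aᵢ` says exactly that `T W = W`.
Now `T` is a Frobenius-symmetric map preserving positivity and fixing a positive definite matrix,
a noncommutative Perron–Frobenius situation: if `T Z = r • Z` and `α` is least with
`-α W ≤ Z ≤ α W`, applying `T` gives `-α W ≤ r • Z ≤ α W`, and testing against a direction where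
the bound on `Z` is attained yields `r ≤ 1`. So all eigenvalues of `T` are at most `1`.
-/

open scoped MatrixOrder

namespace Matrix

variable {κ ι : Type*} [Fintype κ] [DecidableEq κ] [Fintype ι]

theorem PosSemidef.trace_mul_nonneg {P Q : Matrix κ κ ℝ} (hP : P.PosSemidef)
    (hQ : Q.PosSemidef) : 0 ≤ (P * Q).trace := by
  have hR : (CFC.sqrt P).IsHermitian := (CFC.sqrt_nonneg P).posSemidef.1
  have h := hQ.mul_mul_conjTranspose_same (CFC.sqrt P)
  rw [hR.eq] at h
  rw [← CFC.sqrt_mul_sqrt_self P hP.nonneg, Matrix.mul_assoc, trace_mul_comm]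
  exact h.trace_nonneg

theorem IsHermitian.exists_eigenvector_abs_max {y : Matrix κ κ ℝ} (hy : y.IsHermitian)
    (hy0 : y ≠ 0) : ∃ μ : ℝ, μ ≠ 0 ∧ ∃ u : κ → ℝ, u ≠ 0 ∧ y *ᵥ u = μ • u ∧
      (|μ| • (1 : Matrix κ κ ℝ) - y).PosSemidef ∧ (|μ| • (1 : Matrix κ κ ℝ) + y).PosSemidef := by
  have : Nonempty κ := by
    by_contra h
    exact hy0 (Matrix.ext fun i ↦ (not_nonempty_iff.mp h).elim i)
  obtain ⟨j, -, hj⟩ := Finset.exists_max_image Finset.univ (fun i ↦ |hy.eigenvalues i|)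
    Finset.univ_nonempty
  have hbound : ∀ x ∈ spectrum ℝ y, |x| ≤ |hy.eigenvalues j| := by
    rw [hy.spectrum_real_eq_range_eigenvalues]
    rintro _ ⟨i, rfl⟩
    exact hj i (Finset.mem_univ i)
  refine ⟨hy.eigenvalues j, ?_, _, (WithLp.ofLp_eq_zero 2).ne.2 <|
    hy.eigenvectorBasis.orthonormal.ne_zero j, hy.mulVec_eigenvectorBasis j, ?_, ?_⟩
  · intro h0
    apply hy0
    rw [← hy.eigenvalues_eq_zero_iff]
    ext i
    simpa [h0] using hj i (Finset.mem_univ i)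
  · rw [← nonneg_iff_posSemidef, sub_nonneg, ← Algebra.algebraMap_eq_smul_one]
    exact le_algebraMap_of_spectrum_le fun x hx ↦ (le_abs_self x).trans (hbound x hx)
  · rw [← nonneg_iff_posSemidef, ← sub_neg_eq_add, sub_nonneg, ← Algebra.algebraMap_eq_smul_one,
      neg_le, ← map_neg]
    exact algebraMap_le_of_le_spectrum fun x hx ↦ neg_le_of_abs_le (hbound x hx)

theorem le_one_of_map_eq_smul {T : Matrix κ κ ℝ →ₗ[ℝ] Matrix κ κ ℝ}
    (hT : ∀ P, P.PosSemidef → (T P).PosSemidef) {W : Matrix κ κ ℝ} (hW : W.PosDef)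
    (hTW : T W = W) {Z : Matrix κ κ ℝ} (hZ : Z.IsHermitian) (hZ0 : Z ≠ 0) {r : ℝ}
    (hTZ : T Z = r • Z) : r ≤ 1 := by
  set V := CFC.sqrt W
  have hV : V.PosDef := (IsStrictlyPositive.sqrt W hW.isStrictlyPositive).posDef
  have hVV : V * V = W := CFC.sqrt_mul_sqrt_self W hW.posSemidef.nonneg
  have hVdet : IsUnit V.det := (isUnit_iff_isUnit_det V).mp hV.isUnit
  have hVconj (X : Matrix κ κ ℝ) : (V * X * V).PosSemidef ↔ X.PosSemidef := by
    have := hV.isUnit.posSemidef_star_right_conjugate_iff (x := X)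
    rwa [star_eq_conjTranspose, hV.1.eq] at this
  set y := V⁻¹ * Z * V⁻¹
  have hVyV : V * y * V = Z := by
    simp [y, Matrix.mul_assoc, mul_nonsing_inv_cancel_left _ _ hVdet, nonsing_inv_mul _ hVdet]
  have hconj (a b : ℝ) : V * (a • 1 - b • y) * V = a • W - b • Z := by
    simp [Matrix.mul_sub, Matrix.sub_mul, hVV, hVyV]
  have hy : y.IsHermitian := by
    have := isHermitian_mul_mul_conjTranspose V⁻¹ hZ
    rwa [hV.inv.1.eq] at this
  have hy0 : y ≠ 0 := by
    rintro h
    simp [h, ← hVyV] at hZ0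
  obtain ⟨μ, hμ, u, hu, hyu, hsub, hadd⟩ := hy.exists_eigenvector_abs_max hy0
  have key (s : ℝ) (hs : (|μ| • 1 - s • y).PosSemidef) : 0 ≤ (|μ| - s * r * μ) * (u ⬝ᵥ u) := by
    have h := hT _ ((hVconj _).2 hs)
    rw [hconj, map_sub, map_smul, map_smul, hTW, hTZ, smul_smul, ← hconj, hVconj] at h
    simpa [sub_mulVec, smul_mulVec, hyu, dotProduct_sub, dotProduct_smul, sub_mul, mul_assoc]
      using h.dotProduct_mulVec_nonneg u
  have hu2 : 0 < u ⬝ᵥ u := dotProduct_self_star_pos_iff.mpr hu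
  have h1 := nonneg_of_mul_nonneg_left (key 1 (by simpa using hsub)) hu2
  have h2 := nonneg_of_mul_nonneg_left (key (-1) (by simpa using hadd)) hu2
  have habs : |r| * |μ| ≤ 1 * |μ| := by
    rw [← abs_mul, one_mul, abs_le]
    constructor <;> linarith
  exact (le_abs_self r).trans (le_of_mul_le_mul_right habs (abs_pos.mpr hμ))

def frameOperator (c : ι → Matrix κ κ ℝ) : Matrix κ κ ℝ →ₗ[ℝ] Matrix κ κ ℝ where
  toFun Z := ∑ i, (c i * Z).trace • c i
  map_add' Y Z := by simp [Matrix.mul_add, add_smul, Finset.sum_add_distrib]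
  map_smul' r Z := by simp [Finset.smul_sum, smul_smul]

section FrameOperator

variable {c : ι → Matrix κ κ ℝ}

theorem frameOperator_apply (c : ι → Matrix κ κ ℝ) (Z : Matrix κ κ ℝ) :
    frameOperator c Z = ∑ i, (c i * Z).trace • c i := rfl

theorem isHermitian_frameOperator (hc : ∀ i, (c i).IsHermitian) (Z : Matrix κ κ ℝ) :
    (frameOperator c Z).IsHermitian :=
  isSelfAdjoint_sum _ fun i _ ↦ (hc i).smul (IsSelfAdjoint.all _)

theorem frameOperator_posSemidef (hc : ∀ i, (c i).PosSemidef) {P : Matrix κ κ ℝ}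
    (hP : P.PosSemidef) : (frameOperator c P).PosSemidef :=
  posSemidef_sum _ fun i _ ↦ (hc i).smul ((hc i).trace_mul_nonneg hP)

theorem mulVec_vec_eq_vec_frameOperator (hc : ∀ i, (c i).IsHermitian) (Z : Matrix κ κ ℝ) :
    (∑ i, vecMulVec (vec (c i)) (vec (c i))) *ᵥ vec Z = vec (frameOperator c Z) := by
  simp only [sum_mulVec, vecMulVec_mulVec, frameOperator_apply, vec_sum, vec_smul,
    vec_dotProduct_vec, op_smul_eq_smul]
  refine Finset.sum_congr rfl fun i _ ↦ ?_
  rw [show (c i)ᵀ = c i by simpa using (hc i).eq]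

theorem vec_dotProduct_vec_frameOperator (hc : ∀ i, (c i).IsHermitian) (Z : Matrix κ κ ℝ) :
    vec Z ⬝ᵥ vec (frameOperator c Z) = ∑ i, (c i * Z).trace ^ 2 := by
  simp only [frameOperator_apply, vec_sum, vec_smul, dotProduct_sum, dotProduct_smul,
    vec_dotProduct_vec, smul_eq_mul]
  refine Finset.sum_congr rfl fun i _ ↦ ?_
  have hci : (c i)ᵀ = c i := by simpa using (hc i).eq
  rw [sq, ← trace_transpose (Zᵀ * c i), transpose_mul, transpose_transpose, hci]

theorem le_one_of_frameOperator_eq_smul (hc : ∀ i, (c i).PosSemidef) {W : Matrix κ κ ℝ}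
    (hW : W.PosDef) (hcW : frameOperator c W = W) {Z : Matrix κ κ ℝ} (hZ0 : Z ≠ 0) {r : ℝ}
    (hcZ : frameOperator c Z = r • Z) : r ≤ 1 := by
  rcases le_or_gt r 0 with hneg | hpos
  · linarith
  have hZ : Z.IsHermitian := by
    have := (isHermitian_frameOperator (fun i ↦ (hc i).1) Z).smul (IsSelfAdjoint.all r⁻¹)
    rwa [hcZ, smul_smul, inv_mul_cancel₀ hpos.ne', one_smul] at this
  exact le_one_of_map_eq_smul (fun P hP ↦ frameOperator_posSemidef hc hP) hW hcW hZ hZ0 hcZ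

theorem sum_sq_trace_mul_le_of_frameOperator_eq (hc : ∀ i, (c i).PosSemidef) {W : Matrix κ κ ℝ}
    (hW : W.PosDef) (hcW : frameOperator c W = W) (Z : Matrix κ κ ℝ) :
    ∑ i, (c i * Z).trace ^ 2 ≤ (Zᵀ * Z).trace := by
  have hcH i := (hc i).isHermitian
  set K := ∑ i, vecMulVec (vec (c i)) (vec (c i))
  have hK : K.IsHermitian :=
    (posSemidef_sum _ fun i _ ↦ by simpa using posSemidef_vecMulVec_self_star (vec (c i))).1
  have hK1 : K ≤ 1 := by
    rw [← map_one (algebraMap ℝ (Matrix (κ × κ) (κ × κ) ℝ))]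
    refine le_algebraMap_of_spectrum_le fun r hr ↦ ?_
    rw [hK.spectrum_real_eq_range_eigenvalues] at hr
    obtain ⟨j, rfl⟩ := hr
    obtain ⟨Z, hZ⟩ := vec_bijective.2 (hK.eigenvectorBasis j)
    refine le_one_of_frameOperator_eq_smul hc hW hcW (Z := Z) ?_ ?_
    · rintro rfl
      apply (WithLp.ofLp_eq_zero 2).ne.2 (hK.eigenvectorBasis.orthonormal.ne_zero j)
      simpa using hZ.symm
    · rw [← vec_inj, ← mulVec_vec_eq_vec_frameOperator hcH, hZ, hK.mulVec_eigenvectorBasis,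
        vec_smul, hZ]
  have h := (nonneg_iff_posSemidef.mp (sub_nonneg.mpr hK1)).dotProduct_mulVec_nonneg (vec Z)
  rw [sub_mulVec, one_mulVec, dotProduct_sub, star_trivial, mulVec_vec_eq_vec_frameOperator hcH,
    vec_dotProduct_vec_frameOperator hcH, vec_dotProduct_vec] at h
  linarith

end FrameOperator

theorem sum_sq_trace_mul_le_trace_mul_mul_mul {A : ι → Matrix κ κ ℝ} (hA : ∀ i, (A i).PosSemidef)
    {W : Matrix κ κ ℝ} (hW : W.PosDef) (hWW : W * W = ∑ i, (A i).trace • A i)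
    {Y : Matrix κ κ ℝ} (hY : Y.IsHermitian) :
    ∑ i, (A i * Y).trace ^ 2 ≤ (Y * W * Y * W).trace := by
  set V := CFC.sqrt W
  have hV : V.PosDef := (IsStrictlyPositive.sqrt W hW.isStrictlyPositive).posDef
  have hVV : V * V = W := CFC.sqrt_mul_sqrt_self W hW.posSemidef.nonneg
  have hVdet : IsUnit V.det := (isUnit_iff_isUnit_det V).mp hV.isUnit
  have hc i : (V⁻¹ * A i * V⁻¹).PosSemidef := by
    have := (hA i).mul_mul_conjTranspose_same V⁻¹
    rwa [hV.inv.isHermitian.eq] at this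
  have htrace i (X : Matrix κ κ ℝ) : (V⁻¹ * A i * V⁻¹ * (V * X * V)).trace = (A i * X).trace := by
    rw [show V⁻¹ * A i * V⁻¹ * (V * X * V) = V⁻¹ * (A i * X * V) by
      simp [Matrix.mul_assoc, nonsing_inv_mul_cancel_left _ _ hVdet], trace_mul_comm,
      mul_nonsing_inv_cancel_right _ _ hVdet]
  have hcW : frameOperator (fun i ↦ V⁻¹ * A i * V⁻¹) W = W := by
    have h i : (V⁻¹ * A i * V⁻¹ * W).trace = (A i).trace := by
      simpa [hVV] using htrace i 1
    simp only [frameOperator_apply, h]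
    calc ∑ i, (A i).trace • (V⁻¹ * A i * V⁻¹) = V⁻¹ * (W * W) * V⁻¹ := by
          simp [hWW, Finset.mul_sum, Finset.sum_mul]
      _ = W := by
          rw [← hVV]
          simp [Matrix.mul_assoc, nonsing_inv_mul_cancel_left _ _ hVdet, mul_nonsing_inv _ hVdet]
  have key := sum_sq_trace_mul_le_of_frameOperator_eq hc hW hcW (V * Y * V)
  simp only [htrace] at key
  have hVt : Vᵀ = V := by simpa using hV.isHermitian.eq
  have hYt : Yᵀ = Y := by simpa using hY.eq
  calc ∑ i, (A i * Y).trace ^ 2 ≤ ((V * Y * V)ᵀ * (V * Y * V)).trace := key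
    _ = (V * (Y * W * Y * V)).trace := by
        rw [transpose_mul, transpose_mul, hVt, hYt, ← hVV]
        simp only [Matrix.mul_assoc]
    _ = (Y * W * Y * W).trace := by rw [trace_mul_comm, Matrix.mul_assoc _ V V, hVV]

end Matrix

theorem msqrt_eq_sqrt {n : ℕ} {A : Matrix (Fin n) (Fin n) ℝ} (hA : A.PosSemidef) :
    msqrt A = CFC.sqrt A := by
  rw [msqrt, dif_pos hA, CFC.sqrt_eq_real_sqrt A hA.nonneg, cfcₙ_eq_cfc, hA.1.cfc_eq,
    IsHermitian.cfc, Unitary.conjStarAlgAut_apply]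
  rfl

theorem stmt1 {n m : ℕ} (A : Fin m → Matrix (Fin n) (Fin n) ℝ)
    (hA : ∀ i, (A i).PosDef)
    (W : Matrix (Fin n) (Fin n) ℝ)
    (hW : W = msqrt (∑ i, (Matrix.trace (A i)) • A i)) :
    ∀ Y : Matrix (Fin n) (Fin n) ℝ, Y.IsHermitian →
      ∑ i, (Matrix.trace (A i * Y)) ^ 2 ≤ Matrix.trace (Y * W * Y * W) := by
  intro Y hY
  rcases isEmpty_or_nonempty (Fin m) with hm | hm
  · simp [hW, msqrt_eq_sqrt PosSemidef.zero]
  rcases isEmpty_or_nonempty (Fin n) with hn | hn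
  · simp [trace_eq_zero_of_isEmpty]
  have hS : (∑ i, (A i).trace • A i).PosDef :=
    posDef_sum Finset.univ_nonempty fun i _ ↦ (hA i).smul (hA i).trace_pos
  rw [msqrt_eq_sqrt hS.posSemidef] at hW
  subst hW
  exact sum_sq_trace_mul_le_trace_mul_mul_mul (fun i ↦ (hA i).posSemidef)
    (IsStrictlyPositive.sqrt _ hS.isStrictlyPositive).posDef
    (CFC.sqrt_mul_sqrt_self _ hS.posSemidef.nonneg) hY
end

section
/- Let a_1, ..., a_m ∈ ℝ^d be vectors with strictly positive entries and let b ∈ ℝ^d have strictly positive entries. Then for every y ∈ ℝ^d one has Σ_{i=1}^m ⟨a_i, y⟩^2 ≤ Σ_{ℓ=1}^d ( (Σ_{i=1}^m ⟨a_i, b⟩ a_i(ℓ)) / b(ℓ) ) y(ℓ)^2. Equivalently, Σ_i a_i a_i^T ⪯ Diag( (A^T A b) ./ b ), where A is the matrix with rows a_i^T and ./ denotes entrywise division. (Theorem 1 specialized to the nonnegative orthant; this is the majorization lemma underlying Lee–Seung multiplicative updates.) -/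
/-!
Each row satisfies the weighted Cauchy–Schwarz inequality
`⟨a, y⟩² ≤ ⟨a, b⟩ · ∑ₗ (a ℓ / b ℓ) y ℓ²`, obtained by splitting `a ℓ y ℓ` as the geometric mean of
`a ℓ b ℓ` and `(a ℓ / b ℓ) y ℓ²`. Summing over the rows and exchanging the two sums gives the
diagonal majorant.
-/

open Finset

theorem Finset.sq_sum_mul_le_sum_mul_mul_sum_div_mul_sq {ι K : Type*} [Field K] [LinearOrder K]
    [IsStrictOrderedRing K] (s : Finset ι) {w b : ι → K} (hw : ∀ i ∈ s, 0 ≤ w i)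
    (hb : ∀ i ∈ s, 0 < b i) (y : ι → K) :
    (∑ i ∈ s, w i * y i) ^ 2 ≤ (∑ i ∈ s, w i * b i) * ∑ i ∈ s, w i / b i * y i ^ 2 :=
  sum_sq_le_sum_mul_sum_of_sq_le_mul s (fun i hi => mul_nonneg (hw i hi) (hb i hi).le)
    (fun i hi => mul_nonneg (div_nonneg (hw i hi) (hb i hi).le) (sq_nonneg _))
    fun i hi => le_of_eq <| by field_simp [(hb i hi).ne']

theorem stmt4 {m d : ℕ} (a : Fin m → Fin d → ℝ) (ha : ∀ i ℓ, 0 < a i ℓ)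
    (b : Fin d → ℝ) (hb : ∀ ℓ, 0 < b ℓ) :
    ∀ y : Fin d → ℝ,
      ∑ i, (∑ ℓ, a i ℓ * y ℓ) ^ 2
        ≤ ∑ ℓ, ((∑ i, (∑ k, a i k * b k) * a i ℓ) / b ℓ) * (y ℓ) ^ 2 := by
  intro y
  calc ∑ i, (∑ ℓ, a i ℓ * y ℓ) ^ 2
      ≤ ∑ i, (∑ k, a i k * b k) * ∑ ℓ, a i ℓ / b ℓ * y ℓ ^ 2 :=
        sum_le_sum fun i _ => univ.sq_sum_mul_le_sum_mul_mul_sum_div_mul_sq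
          (fun ℓ _ => (ha i ℓ).le) (fun ℓ _ => hb ℓ) y
    _ = ∑ ℓ, ((∑ i, (∑ k, a i k * b k) * a i ℓ) / b ℓ) * (y ℓ) ^ 2 := by
        have exchange : ∀ c : Fin m → ℝ, ∑ i, c i * ∑ ℓ, a i ℓ / b ℓ * y ℓ ^ 2
            = ∑ ℓ, ((∑ i, c i * a i ℓ) / b ℓ) * y ℓ ^ 2 := fun c => by
          simp only [mul_sum, sum_div, sum_mul]
          rw [sum_comm]
          exact sum_congr rfl fun ℓ _ => sum_congr rfl fun i _ => by ring
        exact exchange _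
end

section
/- Let A be an m×d real matrix with strictly positive entries, let x ∈ ℝ^m be entrywise nonnegative, and let b ∈ ℝ^d be entrywise positive. Define the multiplicative update b' by b'(ℓ) = b(ℓ) · (A^T x)(ℓ) / (A^T A b)(ℓ) for each ℓ = 1, ..., d. Then ‖A b' − x‖_2 ≤ ‖A b − x‖_2. (Monotonicity of the squared loss under the Lee–Seung multiplicative update; the specialization of the SCMU algorithm to the nonnegative orthant.) -/
/-!
Write `b' = b + δ` and `M = AᵀA`. Expanding the square,
`‖A b' - x‖² = ‖A b - x‖² + 2 δ ⬝ g + δ ⬝ M δ` with `g = Aᵀ (A b - x) = M b - Aᵀ x`.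
Since `M` is symmetric with nonnegative entries and `b > 0`, AM-GM bounds `δ ⬝ M δ` by the
diagonal form `∑ (M b)_l δ_l² / b_l`. The update is exactly the minimiser
`δ_l = -b_l g_l / (M b)_l` of this separable majorant, where it takes the value
`-∑ b_l g_l² / (M b)_l ≤ 0`.
-/

open Matrix

theorem two_mul_mul_le_div_add_div {p q u v : ℝ} (hp : 0 < p) (hq : 0 < q) :
    2 * (u * v) ≤ q * u ^ 2 / p + p * v ^ 2 / q := by
  rw [div_add_div _ _ hp.ne' hq.ne', le_div_iff₀ (mul_pos hp hq)]
  nlinarith [sq_nonneg (q * u - p * v)]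

theorem mulVec_pos_of_pos {ι κ : Type*} [Fintype κ] [Nonempty κ] {A : Matrix ι κ ℝ}
    (hA : ∀ i j, 0 < A i j) {v : κ → ℝ} (hv : ∀ j, 0 < v j) (i : ι) : 0 < (A *ᵥ v) i :=
  Finset.sum_pos (fun j _ => mul_pos (hA i j) (hv j)) Finset.univ_nonempty

section

variable {ι κ : Type*} [Fintype ι] [Fintype κ]

theorem Matrix.IsSymm.dotProduct_mulVec_le_sum_div {M : Matrix κ κ ℝ} (hM : M.IsSymm)
    (hM₀ : ∀ k l, 0 ≤ M k l) {b : κ → ℝ} (hb : ∀ l, 0 < b l) (δ : κ → ℝ) :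
    δ ⬝ᵥ M *ᵥ δ ≤ ∑ l, (M *ᵥ b) l * δ l ^ 2 / b l := by
  set S := ∑ l, ∑ k, M l k * (b k * δ l ^ 2 / b l)
  have hS : ∑ l, ∑ k, M l k * (b l * δ k ^ 2 / b k) = S := by
    rw [Finset.sum_comm]
    simp only [hM.apply]
    rfl
  have hRHS : ∑ l, (M *ᵥ b) l * δ l ^ 2 / b l = S := by
    simp only [mulVec, dotProduct, Finset.sum_mul, Finset.sum_div, S]
    exact Finset.sum_congr rfl fun l _ => Finset.sum_congr rfl fun k _ => by ring
  have hAMGM : 2 * (δ ⬝ᵥ M *ᵥ δ) ≤ S + S := by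
    nth_rw 1 [← hS]
    simp only [S, mulVec, dotProduct, Finset.mul_sum, ← Finset.sum_add_distrib]
    refine Finset.sum_le_sum fun l _ => Finset.sum_le_sum fun k _ => ?_
    have := two_mul_mul_le_div_add_div (u := δ l) (v := δ k) (hb l) (hb k)
    nlinarith [mul_le_mul_of_nonneg_left this (hM₀ l k)]
  linarith

theorem sum_sq_mulVec_add_sub (A : Matrix ι κ ℝ) (x : ι → ℝ) (b δ : κ → ℝ) :
    ∑ i, ((A *ᵥ (b + δ)) i - x i) ^ 2 = ∑ i, ((A *ᵥ b) i - x i) ^ 2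
      + 2 * (δ ⬝ᵥ Aᵀ *ᵥ (A *ᵥ b - x)) + δ ⬝ᵥ (Aᵀ * A) *ᵥ δ := by
  have hsq (v : ι → ℝ) : ∑ i, v i ^ 2 = v ⬝ᵥ v := by simp only [dotProduct, sq]
  have hadj (w : ι → ℝ) : δ ⬝ᵥ Aᵀ *ᵥ w = A *ᵥ δ ⬝ᵥ w := by
    rw [mulVec_transpose, dotProduct_comm, ← dotProduct_mulVec, dotProduct_comm]
  have hres : A *ᵥ (b + δ) - x = (A *ᵥ b - x) + A *ᵥ δ := by
    rw [mulVec_add]; abel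
  set r := A *ᵥ b - x
  simp only [← Pi.sub_apply (A *ᵥ _) x, hsq, hres, ← mulVec_mulVec, hadj, add_dotProduct,
    dotProduct_add, dotProduct_comm (A *ᵥ δ) r]
  ring

theorem sum_sq_mulVec_multiplicativeUpdate_le (A : Matrix ι κ ℝ)
    (hM₀ : ∀ k l, 0 ≤ (Aᵀ * A) k l) (x : ι → ℝ) {b : κ → ℝ} (hb : ∀ l, 0 < b l)
    (hMb : ∀ l, 0 < ((Aᵀ * A) *ᵥ b) l) {b' : κ → ℝ}
    (hb' : ∀ l, b' l = b l * (Aᵀ *ᵥ x) l / ((Aᵀ * A) *ᵥ b) l) :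
    ∑ i, ((A *ᵥ b') i - x i) ^ 2 ≤ ∑ i, ((A *ᵥ b) i - x i) ^ 2 := by
  set M := Aᵀ * A
  set g := Aᵀ *ᵥ (A *ᵥ b - x)
  set δ := b' - b
  have hg : g = M *ᵥ b - Aᵀ *ᵥ x := by simp only [g, M, mulVec_sub, mulVec_mulVec]
  have hδ (l : κ) : δ l = -(b l * g l / (M *ᵥ b) l) := by
    simp only [δ, Pi.sub_apply, hb' l, hg]
    field_simp [(hMb l).ne']
    ring
  have hmajorant : 2 * (δ ⬝ᵥ g) + ∑ l, (M *ᵥ b) l * δ l ^ 2 / b l ≤ 0 := by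
    rw [dotProduct, Finset.mul_sum, ← Finset.sum_add_distrib]
    refine Finset.sum_nonpos fun l _ => ?_
    have hval :
        2 * (δ l * g l) + (M *ᵥ b) l * δ l ^ 2 / b l = -(b l * g l ^ 2 / (M *ᵥ b) l) := by
      rw [hδ l]
      field_simp [(hMb l).ne', (hb l).ne']
      ring
    rw [hval, neg_nonpos]
    exact div_nonneg (mul_nonneg (hb l).le (sq_nonneg _)) (hMb l).le
  have hM : M.IsSymm := by rw [IsSymm, transpose_mul, transpose_transpose]
  have hquad := hM.dotProduct_mulVec_le_sum_div hM₀ hb δ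
  rw [show b' = b + δ by simp [δ], sum_sq_mulVec_add_sub]
  linarith

end

theorem stmt10_general {m d : ℕ} (A : Matrix (Fin m) (Fin d) ℝ) (hA : ∀ i ℓ, 0 < A i ℓ)
    (x : Fin m → ℝ)
    (b : Fin d → ℝ) (hb : ∀ ℓ, 0 < b ℓ)
    (b' : Fin d → ℝ)
    (hb' : ∀ ℓ, b' ℓ = b ℓ * (Aᵀ.mulVec x ℓ) / ((Aᵀ * A).mulVec b ℓ)) :
    Real.sqrt (∑ i, (A.mulVec b' i - x i) ^ 2)
      ≤ Real.sqrt (∑ i, (A.mulVec b i - x i) ^ 2) := by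
  apply Real.sqrt_le_sqrt
  rcases isEmpty_or_nonempty (Fin m) with _ | _
  · simp
  have hM₀ (k l : Fin d) : 0 ≤ (Aᵀ * A) k l := by
    rw [mul_apply]
    exact Finset.sum_nonneg fun i _ => mul_nonneg (hA i k).le (hA i l).le
  have hMb (l : Fin d) : 0 < ((Aᵀ * A) *ᵥ b) l := by
    have : Nonempty (Fin d) := ⟨l⟩
    rw [← mulVec_mulVec]
    exact mulVec_pos_of_pos (fun i k => hA k i) (mulVec_pos_of_pos hA hb) l
  exact sum_sq_mulVec_multiplicativeUpdate_le A hM₀ x hb hMb hb'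

theorem stmt10 {m d : ℕ} (A : Matrix (Fin m) (Fin d) ℝ) (hA : ∀ i ℓ, 0 < A i ℓ)
    (x : Fin m → ℝ) (hx : ∀ i, 0 ≤ x i)
    (b : Fin d → ℝ) (hb : ∀ ℓ, 0 < b ℓ)
    (b' : Fin d → ℝ)
    (hb' : ∀ ℓ, b' ℓ = b ℓ * (Aᵀ.mulVec x ℓ) / ((Aᵀ * A).mulVec b ℓ)) :
    Real.sqrt (∑ i, (A.mulVec b' i - x i) ^ 2)
      ≤ Real.sqrt (∑ i, (A.mulVec b i - x i) ^ 2) :=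
  stmt10_general A hA x b hb b' hb'
end

section
/- Consider the second-order cone Euclidean Jordan algebra on ℝ × ℝ^n with Jordan product (p, q) ∘ (r, s) = (pr + ⟨q, s⟩, ps + rq) and trace inner product ⟨(p,q), (r,s)⟩ = 2(pr + ⟨q,s⟩). Let a = (t, x) with x ≠ 0 and ‖x‖ < t, and define c = (c_0, c_1) by c_0 = (√(t+‖x‖) + √(t−‖x‖))/2 and c_1 = ((√(t+‖x‖) − √(t−‖x‖))/(2‖x‖)) x, so that c ∘ c = a. Then for every b ∈ ℝ × ℝ^n one has ⟨a, b⟩^2 ≤ 2t · ⟨b, 2 c ∘ (c ∘ b) − a ∘ b⟩. (Lemma 3 of the paper, ⟨a,b⟩^2 ≤ tr(a) ⟨b, P(a^{1/2}) b⟩, specialized to the second-order cone, where P(c)b = 2c∘(c∘b) − (c∘c)∘b and tr(t,x) = 2t.) -/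
open scoped RealInnerProductSpace

/- The Jordan product of the second-order cone Euclidean Jordan algebra on `ℝ × ℝⁿ`:
`(p, q) ∘ (r, s) = (p r + ⟨q, s⟩, p s + r q)`. -/
noncomputable def socMul {n : ℕ} (p q : ℝ × EuclideanSpace ℝ (Fin n)) :
    ℝ × EuclideanSpace ℝ (Fin n) :=
  (p.1 * q.1 + ⟪p.2, q.2⟫, p.1 • q.2 + q.1 • p.2)

/- The trace inner product `⟨(p,q),(r,s)⟩ = 2 (p r + ⟨q, s⟩)` of the second-order cone
Euclidean Jordan algebra. -/
noncomputable def socInner {n : ℕ} (p q : ℝ × EuclideanSpace ℝ (Fin n)) : ℝ :=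
  2 * (p.1 * q.1 + ⟪p.2, q.2⟫)

/-!
With `T = c₀² + ‖c₁‖²` and `δ = c₀² - ‖c₁‖² = det c`, the quadratic form `⟨b, P(c) b⟩` of
`b = (β, y)` is `2 (T β² + 4 c₀ β ⟨c₁, y⟩ + δ ‖y‖² + 2 ⟨c₁, y⟩²)`, while
`⟨c ∘ c, b⟩ = 2 (T β + 2 c₀ ⟨c₁, y⟩)`. After cancelling, the inequality becomes
`δ (T ‖y‖² - 2 ⟨c₁, y⟩²) ≥ 0`, which holds whenever `δ ≥ 0` by Cauchy–Schwarz.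
For the square root `c` of `a = (t, x)` one checks `c ∘ c = a`, and `δ ≥ 0` because
`‖c₁‖ = (√(t + ‖x‖) - √(t - ‖x‖)) / 2 ≤ c₀`.
-/

section

variable {n : ℕ}

noncomputable def socQuadRep (c b : ℝ × EuclideanSpace ℝ (Fin n)) :
    ℝ × EuclideanSpace ℝ (Fin n) :=
  (2 : ℝ) • socMul c (socMul c b) - socMul (socMul c c) b

lemma socMul_self (c : ℝ × EuclideanSpace ℝ (Fin n)) :
    socMul c c = (c.1 ^ 2 + ‖c.2‖ ^ 2, (2 * c.1) • c.2) := by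
  ext1
  · simp [socMul, sq]
  · simp only [socMul]
    module

lemma socInner_socMul_self (c b : ℝ × EuclideanSpace ℝ (Fin n)) :
    socInner (socMul c c) b = 2 * ((c.1 ^ 2 + ‖c.2‖ ^ 2) * b.1 + 2 * c.1 * ⟪c.2, b.2⟫) := by
  simp only [socMul_self, socInner, real_inner_smul_left]

lemma socInner_socQuadRep (c b : ℝ × EuclideanSpace ℝ (Fin n)) :
    socInner b (socQuadRep c b) =
      2 * ((c.1 ^ 2 + ‖c.2‖ ^ 2) * b.1 ^ 2 + 4 * c.1 * b.1 * ⟪c.2, b.2⟫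
        + (c.1 ^ 2 - ‖c.2‖ ^ 2) * ‖b.2‖ ^ 2 + 2 * ⟪c.2, b.2⟫ ^ 2) := by
  simp only [socQuadRep, socInner, socMul, Prod.smul_fst, Prod.smul_snd,
    Prod.fst_sub, Prod.snd_sub, smul_eq_mul, inner_add_left, inner_add_right, inner_sub_right,
    inner_smul_right, real_inner_smul_left, real_inner_self_eq_norm_sq, real_inner_comm b.2 c.2]
  ring

theorem socInner_sq_le_trace_mul_socInner_socQuadRep (c b : ℝ × EuclideanSpace ℝ (Fin n))
    (hc : ‖c.2‖ ^ 2 ≤ c.1 ^ 2) :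
    socInner (socMul c c) b ^ 2 ≤ 2 * (socMul c c).1 * socInner b (socQuadRep c b) := by
  rw [socInner_socMul_self, socInner_socQuadRep, socMul_self]
  set u := ⟪c.2, b.2⟫
  have hu : u ^ 2 ≤ ‖c.2‖ ^ 2 * ‖b.2‖ ^ 2 := by
    rw [← mul_pow, sq_le_sq, abs_mul, abs_norm, abs_norm]
    exact abs_real_inner_le_norm c.2 b.2
  have hδ : 0 ≤ (c.1 ^ 2 - ‖c.2‖ ^ 2) * ((c.1 ^ 2 + ‖c.2‖ ^ 2) * ‖b.2‖ ^ 2 - 2 * u ^ 2) := by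
    apply mul_nonneg (by linarith)
    nlinarith [mul_nonneg (sub_nonneg.2 hc) (sq_nonneg ‖b.2‖)]
  nlinarith [hδ]

end

theorem stmt14 {n : ℕ} (t : ℝ) (x : EuclideanSpace ℝ (Fin n)) (hx : x ≠ 0) (hxt : ‖x‖ < t)
    (c₀ : ℝ) (c₁ : EuclideanSpace ℝ (Fin n))
    (hc₀ : c₀ = (Real.sqrt (t + ‖x‖) + Real.sqrt (t - ‖x‖)) / 2)
    (hc₁ : c₁ = ((Real.sqrt (t + ‖x‖) - Real.sqrt (t - ‖x‖)) / (2 * ‖x‖)) • x) :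
    ∀ b : ℝ × EuclideanSpace ℝ (Fin n),
      (socInner (t, x) b) ^ 2
        ≤ 2 * t * socInner b
            ((2 : ℝ) • socMul (c₀, c₁) (socMul (c₀, c₁) b) - socMul (t, x) b) := by
  intro b
  have hs : 0 < ‖x‖ := norm_pos_iff.2 hx
  set p := Real.sqrt (t + ‖x‖)
  set q := Real.sqrt (t - ‖x‖)
  have hp2 : p ^ 2 = t + ‖x‖ := Real.sq_sqrt (by linarith)
  have hq2 : q ^ 2 = t - ‖x‖ := Real.sq_sqrt (by linarith)
  have hq : 0 ≤ q := Real.sqrt_nonneg _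
  have hqp : q ≤ p := Real.sqrt_le_sqrt (by linarith)
  have hc₁_norm : ‖c₁‖ = (p - q) / 2 := by
    rw [hc₁, norm_smul, Real.norm_eq_abs, abs_of_nonneg (by positivity)]
    field_simp
  have hsq : socMul (c₀, c₁) (c₀, c₁) = (t, x) := by
    rw [socMul_self]
    ext1
    · simp only [hc₁_norm, hc₀]
      linear_combination (hp2 + hq2) / 2
    · simp only [hc₁, hc₀, smul_smul]
      convert one_smul ℝ x
      field_simp
      linear_combination hp2 - hq2
  have hdet : ‖c₁‖ ^ 2 ≤ c₀ ^ 2 := by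
    rw [hc₁_norm, hc₀]
    gcongr
    linarith
  simpa [socQuadRep, hsq] using socInner_sq_le_trace_mul_socInner_socQuadRep (c₀, c₁) b hdet
end
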